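/- Let u : B_1 → ℝ (B_1 ⊂ ℝⁿ, n ≥ 1) and let δ : (0,1) → (0,∞) be monotonically increasing with lim_{r→0} δ(r) = 0. Assume that for every x̄ ∈ B_{1/4} there is b(x̄) ∈ ℝⁿ such that ⨍_{B_r(x̄)} |u(x) − [u(x̄) + b(x̄)·(x − x̄)]| dx ≤ r δ(r) for all 0 < r < 1/2. Then there is a dimensional constant C such that for all x̄, ȳ ∈ B_{1/4} with 0 < |x̄ − ȳ| < 1/8, |b(x̄) − b(ȳ)| ≤ 2C δ(4|x̄ − ȳ|). -/

import Mathlib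

/-!
Put `r = |x̄ - ȳ|`, so that `B_r(ȳ) ⊆ B_{2r}(x̄)`. The affine approximations `ℓ_x̄`, `ℓ_ȳ` differ
by an affine function `c + β·(x - ȳ)` with `β = b(x̄) - b(ȳ)`, and such a function has mean modulus
at least `4⁻ⁿ r|β|/2` on `B_r(ȳ)`: after a change of sign `c ≥ 0`, and then the function exceeds
`r|β|/2` on the ball of radius `r/4` centred `3r/4` away from `ȳ` in the direction of `β`. By the
triangle inequality the same mean is at most
`⨍_{B_r(ȳ)} |u - ℓ_x̄| + ⨍_{B_r(ȳ)} |u - ℓ_ȳ| ≤ 2ⁿ · 2r δ(2r) + r δ(r)`,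
and monotonicity of `δ` gives the bound with `C = 4ⁿ (2ⁿ⁺¹ + 1)`.
-/

open MeasureTheory Metric Set Filter Module
open scoped Topology RealInnerProductSpace

theorem setAverage_abs_sub_le_add {α : Type*} [MeasurableSpace α] {μ : Measure α} {s : Set α}
    {f g h : α → ℝ} (hg : IntegrableOn (fun z => f z - g z) s μ)
    (hh : IntegrableOn (fun z => f z - h z) s μ) :
    ⨍ z in s, |g z - h z| ∂μ ≤ ⨍ z in s, |f z - g z| ∂μ + ⨍ z in s, |f z - h z| ∂μ := by
  simp only [setAverage_eq, smul_eq_mul, ← mul_add]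
  rw [← integral_add hg.abs hh.abs]
  refine mul_le_mul_of_nonneg_left ?_ (by positivity)
  refine integral_mono_of_nonneg (.of_forall fun z => abs_nonneg _) (hg.abs.add hh.abs)
    (.of_forall fun z => ?_)
  simpa only [abs_sub_comm (g z)] using abs_sub_le (g z) (f z) (h z)

theorem Continuous.integrableOn_ball {X : Type*} [MetricSpace X] [ProperSpace X]
    [MeasurableSpace X] [OpensMeasurableSpace X] {μ : Measure X} [IsFiniteMeasureOnCompacts μ]
    {F : Type*} [NormedAddCommGroup F] {f : X → F} (hf : Continuous f) (x : X) (r : ℝ) :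
    IntegrableOn f (ball x r) μ :=
  (hf.continuousOn.integrableOn_compact (isCompact_closedBall x r)).mono_set
    ball_subset_closedBall

theorem measureReal_ball_pos {X : Type*} [PseudoMetricSpace X] [ProperSpace X]
    [MeasurableSpace X] (μ : Measure X) [μ.IsOpenPosMeasure] [IsFiniteMeasureOnCompacts μ]
    (x : X) {r : ℝ} (hr : 0 < r) : 0 < μ.real (ball x r) :=
  ENNReal.toReal_pos (measure_ball_pos μ x hr).ne' measure_ball_lt_top.ne

section AddHaar

variable {E : Type*} [NormedAddCommGroup E] [NormedSpace ℝ E] [FiniteDimensional ℝ E]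
  [MeasurableSpace E] [BorelSpace E] (μ : Measure E) [μ.IsAddHaarMeasure]

theorem addHaar_real_ball_of_pos (x : E) {r : ℝ} (hr : 0 < r) :
    μ.real (ball x r) = r ^ finrank ℝ E * μ.real (ball 0 1) := by
  rw [measureReal_def, Measure.addHaar_ball_of_pos μ x hr, ENNReal.toReal_mul,
    ENNReal.toReal_ofReal (by positivity), measureReal_def]

theorem setAverage_ball_le_of_subset {f : E → ℝ} {x y : E} {r R : ℝ} (hr : 0 < r)
    (hsub : ball y r ⊆ ball x R) (hf : IntegrableOn f (ball x R) μ) (hf0 : 0 ≤ f) :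
    ⨍ z in ball y r, f z ∂μ ≤ (R / r) ^ finrank ℝ E * ⨍ z in ball x R, f z ∂μ := by
  have hR : 0 < R := pos_of_mem_ball (hsub (mem_ball_self hr))
  have hV := measureReal_ball_pos μ (0 : E) one_pos
  have hint : ∫ z in ball y r, f z ∂μ ≤ ∫ z in ball x R, f z ∂μ :=
    setIntegral_mono_set hf (.of_forall hf0) hsub.eventuallyLE
  rw [setAverage_eq, setAverage_eq, smul_eq_mul, smul_eq_mul, addHaar_real_ball_of_pos μ y hr,
    addHaar_real_ball_of_pos μ x hR]
  calc (r ^ finrank ℝ E * μ.real (ball 0 1))⁻¹ * ∫ z in ball y r, f z ∂μ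
      ≤ (r ^ finrank ℝ E * μ.real (ball 0 1))⁻¹ * ∫ z in ball x R, f z ∂μ := by gcongr
    _ = (R / r) ^ finrank ℝ E * ((R ^ finrank ℝ E * μ.real (ball 0 1))⁻¹ *
          ∫ z in ball x R, f z ∂μ) := by rw [div_pow]; field_simp

end AddHaar

section InnerProduct

variable {E : Type*} [NormedAddCommGroup E] [InnerProductSpace ℝ E]

theorem le_inner_sub_of_mem_ball (β y : E) {r : ℝ} {z : E}
    (hz : z ∈ ball (y + (3 * r / (4 * ‖β‖)) • β) (r / 4)) :
    r * ‖β‖ / 2 ≤ ⟪β, z - y⟫ := by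
  rcases eq_or_ne β 0 with rfl | hβ
  · simp
  have hβ' : 0 < ‖β‖ := norm_pos_iff.mpr hβ
  set p := y + (3 * r / (4 * ‖β‖)) • β
  have hcenter : ⟪β, p - y⟫ = 3 * r * ‖β‖ / 4 := by
    rw [add_sub_cancel_left, real_inner_smul_right, real_inner_self_eq_norm_sq]
    field_simp
  have hdev : -(‖β‖ * (r / 4)) ≤ ⟪β, z - p⟫ := by
    have := neg_abs_le ⟪β, z - p⟫
    have := abs_real_inner_le_norm β (z - p)
    have : ‖z - p‖ < r / 4 := by rwa [← dist_eq_norm]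
    nlinarith
  have hsplit : ⟪β, z - y⟫ = ⟪β, p - y⟫ + ⟪β, z - p⟫ := by
    rw [← inner_add_right, sub_add_sub_cancel']
  linarith

theorem ball_add_smul_subset_ball (β y : E) {r : ℝ} (hr : 0 ≤ r) :
    ball (y + (3 * r / (4 * ‖β‖)) • β) (r / 4) ⊆ ball y r := by
  refine ball_subset_ball' ?_
  rw [dist_eq_norm, add_sub_cancel_left, norm_smul, Real.norm_eq_abs,
    abs_of_nonneg (by positivity)]
  rcases eq_or_ne β 0 with rfl | hβ
  · simp only [norm_zero, mul_zero, div_zero, add_zero]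
    linarith
  · have hβ' : 0 < ‖β‖ := norm_pos_iff.mpr hβ
    field_simp
    linarith

end InnerProduct

section AffineAverage

variable {E : Type*} [NormedAddCommGroup E] [InnerProductSpace ℝ E] [FiniteDimensional ℝ E]
  [MeasurableSpace E] [BorelSpace E] (μ : Measure E) [μ.IsAddHaarMeasure]

theorem le_setAverage_abs_affine_of_nonneg {c : ℝ} (hc : 0 ≤ c) (β y : E) {r : ℝ} (hr : 0 < r) :
    r * ‖β‖ / (2 * 4 ^ finrank ℝ E) ≤ ⨍ z in ball y r, |c + ⟪β, z - y⟫| ∂μ := by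
  set p := y + (3 * r / (4 * ‖β‖)) • β
  have hsub : ball p (r / 4) ⊆ ball y r := ball_add_smul_subset_ball β y hr.le
  have hint : IntegrableOn (fun z => |c + ⟪β, z - y⟫|) (ball y r) μ :=
    Continuous.integrableOn_ball (by fun_prop) y r
  have hV := measureReal_ball_pos μ (0 : E) one_pos
  have hlarge : ∀ z ∈ ball p (r / 4), r * ‖β‖ / 2 ≤ |c + ⟪β, z - y⟫| := fun z hz =>
    (by linarith [le_inner_sub_of_mem_ball β y hz] : r * ‖β‖ / 2 ≤ c + ⟪β, z - y⟫).trans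
      (le_abs_self _)
  have hbound : r * ‖β‖ / 2 * μ.real (ball p (r / 4)) ≤ ∫ z in ball y r, |c + ⟪β, z - y⟫| ∂μ :=
    (setIntegral_ge_of_const_le_real measurableSet_ball measure_ball_lt_top.ne hlarge
      (hint.mono_set hsub)).trans
      (setIntegral_mono_set hint (.of_forall fun _ => abs_nonneg _) hsub.eventuallyLE)
  rw [addHaar_real_ball_of_pos μ p (by positivity)] at hbound
  rw [setAverage_eq, smul_eq_mul, addHaar_real_ball_of_pos μ y hr]
  calc r * ‖β‖ / (2 * 4 ^ finrank ℝ E)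
      = (r ^ finrank ℝ E * μ.real (ball 0 1))⁻¹ *
          (r * ‖β‖ / 2 * ((r / 4) ^ finrank ℝ E * μ.real (ball 0 1))) := by
        rw [div_pow]; field_simp
    _ ≤ _ := by gcongr

theorem le_setAverage_abs_affine (c : ℝ) (β y : E) {r : ℝ} (hr : 0 < r) :
    r * ‖β‖ / (2 * 4 ^ finrank ℝ E) ≤ ⨍ z in ball y r, |c + ⟪β, z - y⟫| ∂μ := by
  rcases le_total 0 c with hc | hc
  · exact le_setAverage_abs_affine_of_nonneg μ hc β y hr
  · have := le_setAverage_abs_affine_of_nonneg μ (neg_nonneg.mpr hc) (-β) y hr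
    simpa only [norm_neg, inner_neg_left, ← neg_add, abs_neg] using this

theorem dist_mul_norm_sub_le_of_setAverage_abs_sub_affine_le {f : E → ℝ} {x y β β' : E}
    {a a' A B : ℝ} (hxy : x ≠ y) (hf : IntegrableOn f (ball x (2 * dist x y)) μ)
    (hx : ⨍ z in ball x (2 * dist x y), |f z - (a + ⟪β, z - x⟫)| ∂μ ≤ A)
    (hy : ⨍ z in ball y (dist x y), |f z - (a' + ⟪β', z - y⟫)| ∂μ ≤ B) :
    dist x y * ‖β - β'‖ ≤ 2 * 4 ^ finrank ℝ E * (2 ^ finrank ℝ E * A + B) := by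
  set r := dist x y
  have hr : 0 < r := dist_pos.mpr hxy
  have hsub : ball y r ⊆ ball x (2 * r) := ball_subset_ball' (by rw [dist_comm]; linarith)
  have hfx : IntegrableOn (fun z => f z - (a + ⟪β, z - x⟫)) (ball x (2 * r)) μ :=
    hf.sub (Continuous.integrableOn_ball (by fun_prop) _ _)
  have hfy : IntegrableOn (fun z => f z - (a' + ⟪β', z - y⟫)) (ball y r) μ :=
    (hf.mono_set hsub).sub (Continuous.integrableOn_ball (by fun_prop) _ _)
  have hdiff : ∀ z, a + ⟪β, z - x⟫ - (a' + ⟪β', z - y⟫)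
      = a - a' + ⟪β, y - x⟫ + ⟪β - β', z - y⟫ := fun z => by
    rw [inner_sub_left, ← sub_add_sub_cancel z y x, inner_add_right]
    ring
  have hmain : r * ‖β - β'‖ / (2 * 4 ^ finrank ℝ E) ≤ 2 ^ finrank ℝ E * A + B :=
    calc r * ‖β - β'‖ / (2 * 4 ^ finrank ℝ E)
        ≤ ⨍ z in ball y r, |a + ⟪β, z - x⟫ - (a' + ⟪β', z - y⟫)| ∂μ := by
          simpa only [hdiff] using le_setAverage_abs_affine μ (a - a' + ⟪β, y - x⟫) (β - β') y hr
      _ ≤ ⨍ z in ball y r, |f z - (a + ⟪β, z - x⟫)| ∂μ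
            + ⨍ z in ball y r, |f z - (a' + ⟪β', z - y⟫)| ∂μ :=
          setAverage_abs_sub_le_add (hfx.mono_set hsub) hfy
      _ ≤ (2 * r / r) ^ finrank ℝ E * ⨍ z in ball x (2 * r), |f z - (a + ⟪β, z - x⟫)| ∂μ + B :=
          add_le_add (setAverage_ball_le_of_subset μ hr hsub hfx.abs fun _ => abs_nonneg _) hy
      _ ≤ 2 ^ finrank ℝ E * A + B := by
          rw [mul_div_cancel_right₀ 2 hr.ne']
          gcongr
  rwa [div_le_iff₀ (by positivity), mul_comm _ (2 * _)] at hmain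

end AffineAverage

theorem gradient_oscillation_estimate_from_affine_approximation_general
    (n : ℕ) :
    ∃ C : ℝ, 0 < C ∧
      ∀ (u : EuclideanSpace ℝ (Fin n) → ℝ),
        IntegrableOn u (ball (0 : EuclideanSpace ℝ (Fin n)) 1) →
        ∀ (δ : ℝ → ℝ),
          (∀ r ∈ Ioo (0:ℝ) 1, 0 < δ r) →
          (∀ r s : ℝ, 0 < r → r ≤ s → s < 1 → δ r ≤ δ s) →
          Tendsto δ (𝓝[>] (0:ℝ)) (𝓝 0) →
          ∀ (b : EuclideanSpace ℝ (Fin n) → EuclideanSpace ℝ (Fin n)),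
            (∀ xb ∈ ball (0 : EuclideanSpace ℝ (Fin n)) (1/4 : ℝ), ∀ r ∈ Ioo (0:ℝ) (1/2 : ℝ),
              ⨍ x in ball xb r, |u x - (u xb + ⟪b xb, x - xb⟫)| ≤ r * δ r) →
            ∀ xb ∈ ball (0 : EuclideanSpace ℝ (Fin n)) (1/4 : ℝ),
              ∀ yb ∈ ball (0 : EuclideanSpace ℝ (Fin n)) (1/4 : ℝ),
                xb ≠ yb → dist xb yb < 1/8 →
                  ‖b xb - b yb‖ ≤ 2 * C * δ (4 * dist xb yb) := by
  refine ⟨4 ^ n * (2 ^ (n + 1) + 1), by positivity, ?_⟩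
  intro u hu δ _ hδ_mono _ b hb xb hxb yb hyb hne hdist
  set r := dist xb yb
  have hr : 0 < r := dist_pos.mpr hne
  have hsub : ball xb (2 * r) ⊆ ball 0 1 :=
    ball_subset_ball' (by linarith [mem_ball.mp hxb])
  have key := dist_mul_norm_sub_le_of_setAverage_abs_sub_affine_le volume hne (hu.mono_set hsub)
    (hb xb hxb (2 * r) ⟨by positivity, by linarith⟩) (hb yb hyb r ⟨hr, by linarith⟩)
  rw [finrank_euclideanSpace_fin] at key
  have hδ₂ : δ (2 * r) ≤ δ (4 * r) := hδ_mono _ _ (by positivity) (by linarith) (by linarith)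
  have hδ₁ : δ r ≤ δ (4 * r) := hδ_mono _ _ hr (by linarith) (by linarith)
  refine le_of_mul_le_mul_left (key.trans ?_) hr
  calc 2 * 4 ^ n * (2 ^ n * (2 * r * δ (2 * r)) + r * δ r)
      ≤ 2 * 4 ^ n * (2 ^ n * (2 * r * δ (4 * r)) + r * δ (4 * r)) := by gcongr
    _ = r * (2 * (4 ^ n * (2 ^ (n + 1) + 1)) * δ (4 * r)) := by ring

/-- If `u` is integrable on `B₁ ⊂ ℝⁿ`, `δ : (0,1) → (0,∞)` is increasing with
`δ(r) → 0` as `r → 0`, and for every `xb ∈ B_{1/4}` there is `b(xb) ∈ ℝⁿ` with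
`⨍_{B_r(xb)} |u(x) - [u(xb) + b(xb)·(x - xb)]| ≤ r δ(r)` for all `0 < r < 1/2`, then for a
dimensional constant `C`, for all `xb, yb ∈ B_{1/4}` with `0 < |xb - yb| < 1/8`,
`|b(xb) - b(yb)| ≤ 2C δ(4|xb - yb|)`. -/
theorem gradient_oscillation_estimate_from_affine_approximation
    (n : ℕ) (hn : 1 ≤ n) :
    ∃ C : ℝ, 0 < C ∧
      ∀ (u : EuclideanSpace ℝ (Fin n) → ℝ),
        IntegrableOn u (ball (0 : EuclideanSpace ℝ (Fin n)) 1) →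
        ∀ (δ : ℝ → ℝ),
          (∀ r ∈ Ioo (0:ℝ) 1, 0 < δ r) →
          (∀ r s : ℝ, 0 < r → r ≤ s → s < 1 → δ r ≤ δ s) →
          Tendsto δ (𝓝[>] (0:ℝ)) (𝓝 0) →
          ∀ (b : EuclideanSpace ℝ (Fin n) → EuclideanSpace ℝ (Fin n)),
            (∀ xb ∈ ball (0 : EuclideanSpace ℝ (Fin n)) (1/4 : ℝ), ∀ r ∈ Ioo (0:ℝ) (1/2 : ℝ),
              ⨍ x in ball xb r, |u x - (u xb + ⟪b xb, x - xb⟫)| ≤ r * δ r) →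
            ∀ xb ∈ ball (0 : EuclideanSpace ℝ (Fin n)) (1/4 : ℝ),
              ∀ yb ∈ ball (0 : EuclideanSpace ℝ (Fin n)) (1/4 : ℝ),
                xb ≠ yb → dist xb yb < 1/8 →
                  ‖b xb - b yb‖ ≤ 2 * C * δ (4 * dist xb yb) :=
  gradient_oscillation_estimate_from_affine_approximation_general n
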